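/- Let A ∈ ℝ_max^{n×n} with MMCS 𝔊_0,…,𝔊_p, and let N_1,…,N_r be the node partition produced by the paper's Algorithm 1 with quasi-critical circuits, indices k(s), and sets U_s, V_s. Then for each s = 1,…,r: the quasi-critical circuit 𝒞 of N_s has mean weight exactly λ_{k(s)}, and in the subgraph 𝒢(A(V_s)) of 𝒢(A) induced by the node set V_s, the maximum mean weight of circuits equals λ_{k(s)}. -/

import Mathlib

open BigOperators

/-- The max-plus semiring `ℝ_max = ℝ ∪ {ε}`, `ε = -∞`, realized as `WithBot ℝ`.
Here `⊔` (i.e. `max`) is the max-plus addition `⊕` and `+` is the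
max-plus multiplication `⊗` (with `⊥ + x = ⊥`). -/
abbrev Rmax : Type := WithBot ℝ

namespace MaxPlus

noncomputable section

/-- Max-plus matrix product `A ⊗ B`. -/
def mul {l m k : ℕ} (A : Matrix (Fin l) (Fin m) Rmax) (B : Matrix (Fin m) (Fin k) Rmax) :
    Matrix (Fin l) (Fin k) Rmax :=
  fun i j => Finset.univ.sup fun s => A i s + B s j

/-- Max-plus identity matrix `I_n` (`0` on the diagonal, `ε` off the diagonal). -/
def one (n : ℕ) : Matrix (Fin n) (Fin n) Rmax :=
  fun i j => if i = j then (0 : Rmax) else ⊥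

/-- Max-plus matrix power `A^{⊗t}`. -/
def pow {n : ℕ} (A : Matrix (Fin n) (Fin n) Rmax) : ℕ → Matrix (Fin n) (Fin n) Rmax
  | 0 => one n
  | t + 1 => mul (pow A t) A

variable {n : ℕ}

/-- `p` is a walk (path) of length `t` in the digraph `𝒢(A)`:
consecutive nodes are joined by arcs (finite entries of `A`). -/
def IsWalk (A : Matrix (Fin n) (Fin n) Rmax) (t : ℕ) (p : ℕ → Fin n) : Prop :=
  ∀ k, k < t → A (p k) (p (k + 1)) ≠ ⊥

/-- The weight of a walk: the sum of its arc weights. -/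
def weight (A : Matrix (Fin n) (Fin n) Rmax) (t : ℕ) (p : ℕ → Fin n) : Rmax :=
  ∑ k ∈ Finset.range t, A (p k) (p (k + 1))

/-- `p` is a circuit of length `t` in `𝒢(A)`. -/
def IsCircuit (A : Matrix (Fin n) (Fin n) Rmax) (t : ℕ) (p : ℕ → Fin n) : Prop :=
  0 < t ∧ IsWalk A t p ∧ p t = p 0

/-- Elementary circuit: no repeated node among `p 0, …, p (t-1)`. -/
def IsElemCircuit (A : Matrix (Fin n) (Fin n) Rmax) (t : ℕ) (p : ℕ → Fin n) : Prop :=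
  IsCircuit A t p ∧ ∀ k, k < t → ∀ l, l < t → p k = p l → k = l

/-- Mean weight `w(𝒞)/ℓ(𝒞)` of a circuit, as a real number
(the weight of a genuine circuit is never `⊥`). -/
def mean (A : Matrix (Fin n) (Fin n) Rmax) (t : ℕ) (p : ℕ → Fin n) : ℝ :=
  WithBot.unbotD 0 (weight A t p) / (t : ℝ)

/-- `x` is an eigenvector of `A` for the eigenvalue `lam`:
`x` is not identically `ε` and `A ⊗ x = lam ⊗ x`. -/
def IsEigenpair (A : Matrix (Fin n) (Fin n) Rmax) (lam : Rmax) (x : Fin n → Rmax) : Prop :=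
  (∃ i, x i ≠ ⊥) ∧ ∀ i, (Finset.univ.sup fun k => A i k + x k) = lam + x i

/-- `lam` is an eigenvalue of `A`. -/
def IsEigenvalue (A : Matrix (Fin n) (Fin n) Rmax) (lam : Rmax) : Prop :=
  ∃ x, IsEigenpair A lam x

/-- `μ = λ(A)`: the maximum mean weight over all circuits of `𝒢(A)`. -/
def IsMaxCircuitMean (A : Matrix (Fin n) (Fin n) Rmax) (μ : ℝ) : Prop :=
  (∃ t p, IsCircuit A t p ∧ mean A t p = μ) ∧ ∀ t p, IsCircuit A t p → mean A t p ≤ μ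

/-- Kleene star `A* = I_n ⊕ A ⊕ A^{⊗2} ⊕ ⋯ ⊕ A^{⊗(n-1)}`. -/
def star (A : Matrix (Fin n) (Fin n) Rmax) : Matrix (Fin n) (Fin n) Rmax :=
  fun i j => (Finset.range n).sup fun k => pow A k i j

/-- Partial sum `I_n ⊕ A ⊕ ⋯ ⊕ A^{⊗m}` of the Kleene star. -/
def starUpTo (A : Matrix (Fin n) (Fin n) Rmax) (m : ℕ) : Matrix (Fin n) (Fin n) Rmax :=
  fun i j => (Finset.range (m + 1)).sup fun k => pow A k i j

/-- Max-plus determinant `det A = ⊕_{π ∈ S_n} ⊗_i a_{iπ(i)}`. -/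
def det (A : Matrix (Fin n) (Fin n) Rmax) : Rmax :=
  Finset.univ.sup fun π : Equiv.Perm (Fin n) => ∑ i, A i (π i)

/-- Max-plus characteristic polynomial `χ_A(t) = det (A ⊕ t ⊗ I_n)`. -/
def charPoly (A : Matrix (Fin n) (Fin n) Rmax) (t : Rmax) : Rmax :=
  det fun i j => A i j ⊔ (if i = j then t else ⊥)

/-- Max-plus diagonal matrix `diag(d)` defined by a finite vector `d`. -/
def diagM (d : Fin n → ℝ) : Matrix (Fin n) (Fin n) Rmax :=
  fun i j => if i = j then ((d i : ℝ) : Rmax) else ⊥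

/-- `A` is irreducible: `𝒢(A)` is strongly connected. -/
def Irreducible (A : Matrix (Fin n) (Fin n) Rmax) : Prop :=
  ∀ i j : Fin n, ∃ t p, 0 < t ∧ IsWalk A t p ∧ p 0 = i ∧ p t = j

/-- `v` is a critical node of `A` (with `lamA = λ(A)`): it lies on a circuit
of mean weight `λ(A)`. -/
def IsCriticalNode (A : Matrix (Fin n) (Fin n) Rmax) (lamA : ℝ) (v : Fin n) : Prop :=
  ∃ t p, IsCircuit A t p ∧ mean A t p = lamA ∧ ∃ m, m < t ∧ p m = v

/-- `(i,j)` is a critical arc of `A` (with `lamA = λ(A)`). -/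
def IsCriticalArc (A : Matrix (Fin n) (Fin n) Rmax) (lamA : ℝ) (i j : Fin n) : Prop :=
  ∃ t p, IsCircuit A t p ∧ mean A t p = lamA ∧ ∃ m, m < t ∧ p m = i ∧ p (m + 1) = j

/-- A multi-circuit: a collection of pairwise node-disjoint elementary circuits,
each given by its length and its node sequence. -/
def IsMultiCircuit (A : Matrix (Fin n) (Fin n) Rmax) (L : List (ℕ × (ℕ → Fin n))) : Prop :=
  (∀ c ∈ L, IsElemCircuit A c.1 c.2) ∧
  L.Pairwise fun c d => ∀ k, k < c.1 → ∀ l, l < d.1 → c.2 k ≠ d.2 l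

/-- Length of a multi-circuit: the sum of the lengths of its circuits. -/
def mcLength {n : ℕ} (L : List (ℕ × (ℕ → Fin n))) : ℕ := (L.map Prod.fst).sum

/-- Weight of a multi-circuit: the sum of the weights of its circuits. -/
def mcWeight (A : Matrix (Fin n) (Fin n) Rmax) (L : List (ℕ × (ℕ → Fin n))) : Rmax :=
  (L.map fun c => weight A c.1 c.2).sum

/-- The value `w(𝔊) + λ·(n − ℓ(𝔊))` of a multi-circuit `𝔊`. -/
def mcVal (A : Matrix (Fin n) (Fin n) Rmax) (lam : ℝ)
    (L : List (ℕ × (ℕ → Fin n))) : Rmax :=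
  mcWeight A L + ((((n : ℝ) - (mcLength L : ℝ)) * lam : ℝ) : Rmax)

/-- `L` is a `λ`-maximal multi-circuit (λ-MMC): `χ_A(λ) = w(L) + λ·(n − ℓ(L))`. -/
def IsMMC (A : Matrix (Fin n) (Fin n) Rmax) (lam : ℝ) (L : List (ℕ × (ℕ → Fin n))) : Prop :=
  IsMultiCircuit A L ∧ charPoly A ((lam : ℝ) : Rmax) = mcVal A lam L

/-- `v` is the maximum weight of multi-circuits of length `k` in `𝒢(A)`
(`v = ⊥ = ε` if there is no multi-circuit of length `k`). -/
def IsMaxMCWeight (A : Matrix (Fin n) (Fin n) Rmax) (k : ℕ) (v : Rmax) : Prop :=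
  (∀ L, IsMultiCircuit A L → mcLength L = k → mcWeight A L ≤ v) ∧
  (v = ⊥ ∨ ∃ L, IsMultiCircuit A L ∧ mcLength L = k ∧ mcWeight A L = v)

/-- `rs` is a list of the `n` roots of `χ_A`, via the factorization of `χ_A`
into linear factors (the leading coefficient of `χ_A` is `0 = e`). -/
def IsCharRoots (A : Matrix (Fin n) (Fin n) Rmax) (rs : Fin n → Rmax) : Prop :=
  ∀ t, charPoly A t = ∑ i, (t ⊔ rs i)

/-- `lam 1 > lam 2 > ⋯ > lam p` are exactly the finite roots among `rs`,
in descending order. -/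
def IsFiniteRootSeq {n : ℕ} (rs : Fin n → Rmax) (p : ℕ) (lam : ℕ → ℝ) : Prop :=
  (∀ k, 1 ≤ k → k < p → lam (k + 1) < lam k) ∧
  (∀ k, 1 ≤ k → k ≤ p → ∃ i, rs i = ((lam k : ℝ) : Rmax)) ∧
  (∀ i, rs i = ⊥ ∨ ∃ k, 1 ≤ k ∧ k ≤ p ∧ rs i = ((lam k : ℝ) : Rmax))

/-- `G 0, G 1, …, G p` is a maximal multi-circuit sequence (MMCS) of `A`:
`G 0 = ∅` and `G k` is a `λ`-MMC for all `λ` with `λ_{k+1} ≤ λ ≤ λ_k`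
(where `λ_0 = +∞` and `λ_{p+1} = ε`). -/
def IsMMCS (A : Matrix (Fin n) (Fin n) Rmax) (p : ℕ) (lam : ℕ → ℝ)
    (G : ℕ → List (ℕ × (ℕ → Fin n))) : Prop :=
  G 0 = [] ∧
  ∀ k, k ≤ p → ∀ x : ℝ, (k < p → lam (k + 1) ≤ x) → (1 ≤ k → x ≤ lam k) → IsMMC A x (G k)

/-- The set of nodes of a circuit. -/
def circNodes (t : ℕ) (p : ℕ → Fin n) : Finset (Fin n) := (Finset.range t).image p

/-- A group produced by Algorithm 1: its node set `nodes`, its quasi-critical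
circuit `(ct, cp)`, and the index `k = k(s)` with `(ct, cp) ∈ 𝔊_{k(s)}`. -/
structure Grp (n : ℕ) where
  nodes : Finset (Fin n)
  ct : ℕ
  cp : ℕ → Fin n
  k : ℕ

/-- The union of the node sets of a list of groups. -/
def unionNodes (st : List (Grp n)) : Finset (Fin n) :=
  st.foldr (fun g acc => g.nodes ∪ acc) ∅

/-- One step of Algorithm 1, processing one circuit `c = (k, t, p)`;
the groups created so far are kept in reverse creation order. -/
def algStep (st : List (Grp n)) (c : ℕ × ℕ × (ℕ → Fin n)) : List (Grp n) :=
  let S := circNodes c.2.1 c.2.2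
  if (S ∩ unionNodes st).Nonempty then
    match st with
    | [] => []
    | g :: rest => { g with nodes := g.nodes ∪ (S \ unionNodes st) } :: rest
  else
    ⟨S, c.2.1, c.2.2, c.1⟩ :: st

/-- Algorithm 1: process the circuits of `G 1`, then `G 2`, …, then `G p` in
order, and finally add all never-covered nodes to the last created group.
The result is the list of groups `N_1, …, N_r` in creation order. -/
def algPartition (p : ℕ) (G : ℕ → List (ℕ × (ℕ → Fin n))) : List (Grp n) :=
  let items : List (ℕ × ℕ × (ℕ → Fin n)) :=
    (List.range p).foldr (fun k acc => ((G (k + 1)).map fun c => (k + 1, c.1, c.2)) ++ acc) []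
  let st := items.foldl algStep []
  match st with
  | [] => []
  | g :: rest =>
      (({ g with nodes := g.nodes ∪ (Finset.univ \ unionNodes (g :: rest)) } : Grp n)
        :: rest).reverse

/-- `U_s = N_1 ∪ ⋯ ∪ N_s` (`s` counted 1-based, i.e. the first `s` groups). -/
def Useq (Gs : List (Grp n)) (s : ℕ) : Finset (Fin n) := unionNodes (Gs.take s)

/-- The walk `P` (of length `t`) contains the circuit `(ct, cp)` as a
consecutive subpath. -/
def ContainsCircuit (t : ℕ) (P : ℕ → Fin n) (ct : ℕ) (cp : ℕ → Fin n) : Prop :=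
  ∃ m, m + ct ≤ t ∧ ∀ j, j ≤ ct → P (m + j) = cp j

end

end MaxPlus


namespace MaxPlus

noncomputable section

open Finset

variable {n : ℕ}

lemma weight_coe {A : Matrix (Fin n) (Fin n) Rmax} {t : ℕ} {q : ℕ → Fin n}
    (h : IsWalk A t q) : ∃ w : ℝ, weight A t q = ((w : ℝ) : Rmax) := by
  induction t with
  | zero => exact ⟨0, by simp [weight]⟩
  | succ t ih =>
    obtain ⟨w, hw⟩ := ih (fun k hk => h k (by omega))
    obtain ⟨a, ha⟩ := WithBot.ne_bot_iff_exists.mp (h t (by omega))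
    refine ⟨w + a, ?_⟩
    rw [weight, Finset.sum_range_succ, ← weight, hw, ← ha, ← WithBot.coe_add]

lemma mcWeight_coe {A : Matrix (Fin n) (Fin n) Rmax} {L : List (ℕ × (ℕ → Fin n))}
    (h : ∀ c ∈ L, IsWalk A c.1 c.2) : ∃ w : ℝ, mcWeight A L = ((w : ℝ) : Rmax) := by
  induction L with
  | nil => exact ⟨0, by simp [mcWeight]⟩
  | cons c L ih =>
    obtain ⟨w, hw⟩ := ih (fun d hd => h d (List.mem_cons_of_mem c hd))
    obtain ⟨a, ha⟩ := weight_coe (h c (List.mem_cons_self))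
    refine ⟨a + w, ?_⟩
    rw [mcWeight, List.map_cons, List.sum_cons, ← mcWeight, hw, ha, ← WithBot.coe_add]

/-- Nodes covered by a multi-circuit. -/
def mcNodes (L : List (ℕ × (ℕ → Fin n))) : Finset (Fin n) :=
  L.foldr (fun c acc => circNodes c.1 c.2 ∪ acc) ∅

lemma mem_circNodes {t : ℕ} {q : ℕ → Fin n} {v : Fin n} :
    v ∈ circNodes t q ↔ ∃ m, m < t ∧ q m = v := by
  simp [circNodes, Finset.mem_image, Finset.mem_range]

lemma mem_mcNodes {L : List (ℕ × (ℕ → Fin n))} {v : Fin n} :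
    v ∈ mcNodes L ↔ ∃ c, c ∈ L ∧ ∃ m, m < c.1 ∧ c.2 m = v := by
  induction L with
  | nil => simp [mcNodes]
  | cons c L ih =>
    simp only [mcNodes, List.foldr_cons] at *
    simp only [Finset.mem_union, ih, mem_circNodes, List.mem_cons]
    constructor
    · rintro (⟨m, hm, hv⟩ | ⟨d, hd, m, hm, hv⟩)
      exacts [⟨c, Or.inl rfl, m, hm, hv⟩, ⟨d, Or.inr hd, m, hm, hv⟩]
    · rintro ⟨d, (rfl | hd), m, hm, hv⟩
      exacts [Or.inl ⟨m, hm, hv⟩, Or.inr ⟨d, hd, m, hm, hv⟩]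

lemma mc_unique {A : Matrix (Fin n) (Fin n) Rmax} {L} (hL : IsMultiCircuit A L)
    {c d : ℕ × (ℕ → Fin n)} (hc : c ∈ L) (hd : d ∈ L) {m l : ℕ}
    (hm : m < c.1) (hl : l < d.1) (h : c.2 m = d.2 l) : c = d ∧ m = l := by
  have hcd : c = d := by
    by_contra hne
    have hsym : Symmetric (fun c d : ℕ × (ℕ → Fin n) =>
        ∀ k, k < c.1 → ∀ l, l < d.1 → c.2 k ≠ d.2 l) :=
      fun a b hab k hk j hj h' => hab j hj k hk h'.symm
    letI : Std.Symm (fun c d : ℕ × (ℕ → Fin n) =>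
        ∀ k, k < c.1 → ∀ l, l < d.1 → c.2 k ≠ d.2 l) := ⟨fun a b h => hsym h⟩
    exact hL.2.forall hc hd hne m hm l hl h
  subst hcd
  exact ⟨rfl, (hL.1 c hc).2 m hm l hl h⟩

/-- The "successor" function of a multi-circuit: each node on a circuit is
mapped to the next node of its circuit, other nodes are fixed. -/
noncomputable def mcNext (L : List (ℕ × (ℕ → Fin n))) : Fin n → Fin n := fun v =>
  if h : ∃ c, c ∈ L ∧ ∃ m, m < c.1 ∧ c.2 m = v then
    h.choose.2 (h.choose_spec.2.choose + 1)
  else v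

lemma mcNext_spec {A : Matrix (Fin n) (Fin n) Rmax} {L} (hL : IsMultiCircuit A L)
    {c} (hc : c ∈ L) {m} (hm : m < c.1) :
    mcNext L (c.2 m) = c.2 (m + 1) := by
  have h : ∃ e, e ∈ L ∧ ∃ j, j < e.1 ∧ e.2 j = c.2 m := ⟨c, hc, m, hm, rfl⟩
  rw [mcNext, dif_pos h]
  have he := h.choose_spec.1
  have hj := h.choose_spec.2.choose_spec.1
  have hje := h.choose_spec.2.choose_spec.2
  obtain ⟨h1, h2⟩ := mc_unique hL he hc hj hm hje
  rw [h2, h1]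

lemma mcNext_inj {A : Matrix (Fin n) (Fin n) Rmax} {L} (hL : IsMultiCircuit A L) :
    Function.Injective (mcNext L) := by
  have hwrap : ∀ c ∈ L, ∀ m, m < c.1 →
      ∃ j, j < c.1 ∧ c.2 (m+1) = c.2 j ∧ (j + (if m+1 = c.1 then c.1 else 0) = m + 1) := by
    intro c hc m hm
    by_cases h : m + 1 = c.1
    · exact ⟨0, (hL.1 c hc).1.1, by rw [h]; exact (hL.1 c hc).1.2.2, by simp [h]⟩
    · exact ⟨m+1, by omega, rfl, by simp [h]⟩
  intro u v huv
  by_cases hu : ∃ c, c ∈ L ∧ ∃ m, m < c.1 ∧ c.2 m = u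
  · obtain ⟨c, hc, m, hm, rfl⟩ := hu
    rw [mcNext_spec hL hc hm] at huv
    obtain ⟨j, hj, hcj, hjm⟩ := hwrap c hc m hm
    by_cases hv : ∃ d, d ∈ L ∧ ∃ l, l < d.1 ∧ d.2 l = v
    · obtain ⟨d, hd, l, hl, rfl⟩ := hv
      rw [mcNext_spec hL hd hl] at huv
      obtain ⟨i, hi, hdi, hil⟩ := hwrap d hd l hl
      rw [hcj, hdi] at huv
      obtain ⟨rfl, rfl⟩ := mc_unique hL hc hd hj hi huv
      have hml : m = l := by split_ifs at hjm hil <;> omega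
      rw [hml]
    · rw [mcNext, dif_neg hv] at huv
      exact absurd ⟨c, hc, j, hj, by rw [← huv, hcj]⟩ hv
  · rw [mcNext, dif_neg hu] at huv
    by_cases hv : ∃ d, d ∈ L ∧ ∃ l, l < d.1 ∧ d.2 l = v
    · obtain ⟨d, hd, l, hl, rfl⟩ := hv
      rw [mcNext_spec hL hd hl] at huv
      obtain ⟨i, hi, hdi, hil⟩ := hwrap d hd l hl
      exact absurd ⟨d, hd, i, hi, by rw [huv, hdi]⟩ hu
    · rw [mcNext, dif_neg hv] at huv; exact huv

lemma mcNodes_card {A : Matrix (Fin n) (Fin n) Rmax} {L} (hL : IsMultiCircuit A L) :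
    (mcNodes L).card = mcLength L := by
  induction L with
  | nil => simp [mcNodes, mcLength]
  | cons c L ih =>
    have hdisj : Disjoint (circNodes c.1 c.2) (mcNodes L) := by
      rw [Finset.disjoint_left]
      intro v hv hv'
      obtain ⟨m, hm, hvm⟩ := mem_circNodes.mp hv
      obtain ⟨d, hd, l, hl, hvl⟩ := mem_mcNodes.mp hv'
      exact (List.rel_of_pairwise_cons hL.2 hd) m hm l hl (hvm.trans hvl.symm)
    have hL' : IsMultiCircuit A L :=
      ⟨fun d hd => hL.1 d (List.mem_cons_of_mem c hd), hL.2.of_cons⟩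
    have hcard : (circNodes c.1 c.2).card = c.1 := by
      rw [circNodes, Finset.card_image_of_injOn, Finset.card_range]
      intro a ha b hb hab
      exact (hL.1 c (List.mem_cons_self)).2 a (Finset.mem_range.mp ha)
        b (Finset.mem_range.mp hb) hab
    show (circNodes c.1 c.2 ∪ mcNodes L).card = _
    rw [Finset.card_union_of_disjoint hdisj, hcard, ih hL', mcLength, mcLength,
      List.map_cons, List.sum_cons]

lemma sum_mcNodes_le {A B : Matrix (Fin n) (Fin n) Rmax} (π : Fin n → Fin n)
    {L : List (ℕ × (ℕ → Fin n))} (hmc : IsMultiCircuit A L)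
    (hπ : ∀ c ∈ L, ∀ m, m < c.1 → π (c.2 m) = c.2 (m+1))
    (hAB : ∀ i j, A i j ≤ B i j) :
    mcWeight A L ≤ ∑ v ∈ mcNodes L, B v (π v) := by
  induction L with
  | nil => simp [mcWeight, mcNodes]
  | cons c L ih =>
    have hdisj : Disjoint (circNodes c.1 c.2) (mcNodes L) := by
      rw [Finset.disjoint_left]
      intro v hv hv'
      obtain ⟨m, hm, hvm⟩ := mem_circNodes.mp hv
      obtain ⟨d, hd, l, hl, hvl⟩ := mem_mcNodes.mp hv'
      exact (List.rel_of_pairwise_cons hmc.2 hd) m hm l hl (hvm.trans hvl.symm)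
    have hL' : IsMultiCircuit A L :=
      ⟨fun d hd => hmc.1 d (List.mem_cons_of_mem c hd), hmc.2.of_cons⟩
    have hcirc : weight A c.1 c.2 ≤ ∑ v ∈ circNodes c.1 c.2, B v (π v) := by
      rw [circNodes, Finset.sum_image (fun a ha b hb hab =>
        (hmc.1 c (List.mem_cons_self)).2 a (Finset.mem_range.mp ha)
          b (Finset.mem_range.mp hb) hab)]
      refine Finset.sum_le_sum fun m hm => ?_
      rw [hπ c (List.mem_cons_self) m (Finset.mem_range.mp hm)]
      exact hAB _ _
    have hstep : mcWeight A (c :: L) = weight A c.1 c.2 + mcWeight A L := by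
      rw [mcWeight, mcWeight, List.map_cons, List.sum_cons]
    rw [hstep]
    show _ ≤ ∑ v ∈ circNodes c.1 c.2 ∪ mcNodes L, B v (π v)
    rw [Finset.sum_union hdisj]
    exact add_le_add hcirc (ih hL' (fun d hd => hπ d (List.mem_cons_of_mem c hd)))

lemma nsmul_coe (x : ℝ) (k : ℕ) : (k • ((x:ℝ) : Rmax)) = (((k * x : ℝ)) : Rmax) := by
  induction k with
  | zero => simp
  | succ k ih =>
    rw [succ_nsmul, ih, ← WithBot.coe_add, WithBot.coe_inj]
    push_cast; ring

/-- Fundamental inequality: the value of any multi-circuit is at most `χ_A(x)`. -/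
lemma mc_le_charPoly {A : Matrix (Fin n) (Fin n) Rmax} {L} (hL : IsMultiCircuit A L)
    (x : ℝ) : mcVal A x L ≤ charPoly A ((x : ℝ) : Rmax) := by
  classical
  set B : Matrix (Fin n) (Fin n) Rmax :=
    fun i j => A i j ⊔ (if i = j then ((x:ℝ):Rmax) else ⊥) with hB
  have hπbij : Function.Bijective (mcNext L) :=
    Finite.injective_iff_bijective.mp (mcNext_inj hL)
  set π := Equiv.ofBijective (mcNext L) hπbij with hπdef
  have hπ : ∀ c ∈ L, ∀ m, m < c.1 → π (c.2 m) = c.2 (m+1) := by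
    intro c hc m hm
    exact mcNext_spec hL hc hm
  have hdet : (∑ i, B i (π i)) ≤ charPoly A ((x : ℝ) : Rmax) :=
    Finset.le_sup (f := fun σ : Equiv.Perm (Fin n) => ∑ i, B i (σ i)) (Finset.mem_univ π)
  refine le_trans ?_ hdet
  have hsplit : ∑ i ∈ Finset.univ \ mcNodes L, B i (π i) + ∑ i ∈ mcNodes L, B i (π i)
      = ∑ i, B i (π i) := Finset.sum_sdiff (Finset.subset_univ _)
  have hfix : ∀ i ∈ Finset.univ \ mcNodes L, ((x:ℝ):Rmax) ≤ B i (π i) := by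
    intro i hi
    have hnot : ¬ ∃ c, c ∈ L ∧ ∃ m, m < c.1 ∧ c.2 m = i := by
      intro h; exact (Finset.mem_sdiff.mp hi).2 (mem_mcNodes.mpr h)
    have : π i = i := by
      show mcNext L i = i
      rw [mcNext, dif_neg hnot]
    rw [this, hB]
    simp only [if_pos rfl]
    exact le_sup_right
  have hcard : mcLength L ≤ n := by
    rw [← mcNodes_card hL]
    simpa using Finset.card_le_card (Finset.subset_univ (mcNodes L))
  have hconst : (((((n:ℝ) - (mcLength L : ℝ)) * x : ℝ)) : Rmax)
      ≤ ∑ i ∈ Finset.univ \ mcNodes L, B i (π i) := by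
    refine le_trans ?_ (Finset.sum_le_sum hfix)
    rw [Finset.sum_const, Finset.card_sdiff_of_subset (Finset.subset_univ _), mcNodes_card hL,
      Finset.card_univ, Fintype.card_fin, nsmul_coe]
    rw [WithBot.coe_le_coe]
    rw [Nat.cast_sub hcard]
  calc mcVal A x L = mcWeight A L + ((((n : ℝ) - (mcLength L : ℝ)) * x : ℝ) : Rmax) := rfl
    _ ≤ ∑ i ∈ mcNodes L, B i (π i) + ∑ i ∈ Finset.univ \ mcNodes L, B i (π i) :=
        add_le_add (sum_mcNodes_le π hL hπ (fun i j => le_sup_left)) hconst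
    _ = ∑ i, B i (π i) := by rw [add_comm]; exact hsplit

lemma coe_finsetSum {α : Type*} (s : Finset α) (f : α → ℝ) :
    ((∑ i ∈ s, f i : ℝ) : Rmax) = ∑ i ∈ s, ((f i : ℝ) : Rmax) := by
  classical
  induction s using Finset.cons_induction with
  | empty => simp
  | cons a s ha ih => rw [Finset.sum_cons, Finset.sum_cons, WithBot.coe_add, ih]

lemma mediant_le {w1 w2 t1 t2 : ℝ} (h1 : 0 < t1) (h2 : 0 < t2) :
    (w1 + w2) / (t1 + t2) ≤ max (w1 / t1) (w2 / t2) := by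
  rcases le_total (w1 / t1) (w2 / t2) with h | h
  · refine le_max_of_le_right ?_
    rw [div_le_div_iff₀ (by linarith) h2]
    rw [div_le_div_iff₀ h1 h2] at h
    nlinarith
  · refine le_max_of_le_left ?_
    rw [div_le_div_iff₀ (by linarith) h1]
    rw [div_le_div_iff₀ h2 h1] at h
    nlinarith

lemma mem_unionNodes {l : List (Grp n)} {v : Fin n} :
    v ∈ unionNodes l ↔ ∃ g ∈ l, v ∈ g.nodes := by
  induction l with
  | nil => simp [unionNodes]
  | cons g l ih =>
    show v ∈ g.nodes ∪ unionNodes l ↔ _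
    simp [Finset.mem_union, ih]

/-- Invariant of the state of Algorithm 1 (groups in reverse creation order). -/
def GrpOK (p : ℕ) (G : ℕ → List (ℕ × (ℕ → Fin n))) (st : List (Grp n)) : Prop :=
  ∀ i (h : i < st.length),
    ((st[i].ct, st[i].cp) ∈ G st[i].k ∧
    1 ≤ st[i].k ∧ st[i].k ≤ p ∧
    (∀ v ∈ circNodes st[i].ct st[i].cp, v ∉ unionNodes (st.drop (i+1))) ∧
    (∀ c ∈ G (st[i].k - 1), circNodes c.1 c.2 ⊆ unionNodes (st.drop (i+1))))

lemma algStep_eq_push {st : List (Grp n)} {c : ℕ × ℕ × (ℕ → Fin n)}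
    (h : ¬ (circNodes c.2.1 c.2.2 ∩ unionNodes st).Nonempty) :
    algStep st c = ⟨circNodes c.2.1 c.2.2, c.2.1, c.2.2, c.1⟩ :: st := by
  exact if_neg h

lemma algStep_eq_augment {g : Grp n} {rest : List (Grp n)} {c : ℕ × ℕ × (ℕ → Fin n)}
    (h : (circNodes c.2.1 c.2.2 ∩ unionNodes (g :: rest)).Nonempty) :
    algStep (g :: rest) c =
      { g with nodes := g.nodes ∪ (circNodes c.2.1 c.2.2 \ unionNodes (g :: rest)) }
        :: rest := by
  exact if_pos h

lemma algStep_inv {A : Matrix (Fin n) (Fin n) Rmax} {p : ℕ}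
    {G : ℕ → List (ℕ × (ℕ → Fin n))}
    {st : List (Grp n)} {c : ℕ × ℕ × (ℕ → Fin n)}
    (hok : GrpOK p G st)
    (hc1 : (c.2.1, c.2.2) ∈ G c.1) (hc2 : 1 ≤ c.1) (hc3 : c.1 ≤ p)
    (hcov : ∀ d ∈ G (c.1 - 1), circNodes d.1 d.2 ⊆ unionNodes st) :
    GrpOK p G (algStep st c) ∧ unionNodes st ⊆ unionNodes (algStep st c) ∧
      circNodes c.2.1 c.2.2 ⊆ unionNodes (algStep st c) := by
  by_cases h : (circNodes c.2.1 c.2.2 ∩ unionNodes st).Nonempty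
  · match st with
    | [] =>
      exfalso
      obtain ⟨v, hv⟩ := h
      have : v ∈ unionNodes ([] : List (Grp n)) := (Finset.mem_inter.mp hv).2
      simp [unionNodes] at this
    | g :: rest =>
      rw [algStep_eq_augment h]
      have hmono : unionNodes (g :: rest) ⊆ unionNodes
          ({ g with nodes := g.nodes ∪ (circNodes c.2.1 c.2.2 \ unionNodes (g :: rest)) } :: rest) := by
        intro v hv
        rcases mem_unionNodes.mp hv with ⟨g', hg', hvg⟩
        rcases List.mem_cons.mp hg' with rfl | hg'
        · exact mem_unionNodes.mpr ⟨_, List.mem_cons_self,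
            Finset.mem_union_left _ hvg⟩
        · exact mem_unionNodes.mpr ⟨g', List.mem_cons_of_mem _ hg', hvg⟩
      refine ⟨?_, hmono, ?_⟩
      · intro i hi
        match i with
        | 0 => exact hok 0 (by simp)
        | (i+1) => exact hok (i+1) hi
      · intro v hv
        by_cases hvU : v ∈ unionNodes (g :: rest)
        · exact hmono hvU
        · exact mem_unionNodes.mpr ⟨_, List.mem_cons_self,
            Finset.mem_union_right _ (Finset.mem_sdiff.mpr ⟨hv, hvU⟩)⟩
  · rw [algStep_eq_push h]
    have hmono : unionNodes st ⊆ unionNodes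
        ((⟨circNodes c.2.1 c.2.2, c.2.1, c.2.2, c.1⟩ : Grp n) :: st) := by
      intro v hv
      rcases mem_unionNodes.mp hv with ⟨g', hg', hvg⟩
      exact mem_unionNodes.mpr ⟨g', List.mem_cons_of_mem _ hg', hvg⟩
    refine ⟨?_, hmono, ?_⟩
    · intro i hi
      match i with
      | 0 =>
        refine ⟨hc1, hc2, hc3, ?_, ?_⟩
        · intro v hv hvU
          exact h ⟨v, Finset.mem_inter.mpr ⟨hv, hvU⟩⟩
        · exact hcov
      | (i+1) => exact hok i (by simpa using hi)
    · intro v hv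
      exact mem_unionNodes.mpr ⟨_, List.mem_cons_self, hv⟩

lemma algFold_inv {A : Matrix (Fin n) (Fin n) Rmax} {p : ℕ}
    {G : ℕ → List (ℕ × (ℕ → Fin n))}
    (B : List (ℕ × ℕ × (ℕ → Fin n))) (k : ℕ) (hk1 : 1 ≤ k) (hk2 : k ≤ p) :
    ∀ st, GrpOK p G st → (∀ d ∈ G (k - 1), circNodes d.1 d.2 ⊆ unionNodes st) →
      (∀ x ∈ B, x.1 = k ∧ (x.2.1, x.2.2) ∈ G k) →
      GrpOK p G (B.foldl algStep st) ∧
        unionNodes st ⊆ unionNodes (B.foldl algStep st) ∧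
        ∀ x ∈ B, circNodes x.2.1 x.2.2 ⊆ unionNodes (B.foldl algStep st) := by
  induction B with
  | nil =>
    intro st h1 h2 _
    exact ⟨h1, Finset.Subset.refl _, by simp⟩
  | cons x B ih =>
    intro st h1 h2 hB
    obtain ⟨hx1, hx2⟩ := hB x (List.mem_cons_self)
    subst hx1
    obtain ⟨s1, s2, s3⟩ := algStep_inv (A := A) h1 hx2 hk1 hk2 h2
    obtain ⟨r1, r2, r3⟩ := ih (algStep st x) s1
      (fun d hd => (h2 d hd).trans s2)
      (fun y hy => hB y (List.mem_cons_of_mem _ hy))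
    refine ⟨r1, s2.trans r2, ?_⟩
    intro y hy
    rcases List.mem_cons.mp hy with rfl | hy
    · exact s3.trans r2
    · exact r3 y hy

lemma algFold_all {A : Matrix (Fin n) (Fin n) Rmax} {p : ℕ}
    {G : ℕ → List (ℕ × (ℕ → Fin n))} (hG0 : G 0 = []) :
    ∀ m, m ≤ p →
      GrpOK p G (((List.range m).foldr
        (fun k acc => ((G (k + 1)).map fun c => (k + 1, c.1, c.2)) ++ acc) []).foldl
          algStep []) ∧
      (∀ j, 1 ≤ j → j ≤ m → ∀ d ∈ G j, circNodes d.1 d.2 ⊆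
        unionNodes (((List.range m).foldr
          (fun k acc => ((G (k + 1)).map fun c => (k + 1, c.1, c.2)) ++ acc) []).foldl
            algStep [])) := by
  have generalInit : ∀ (l : List ℕ) (init : List (ℕ × ℕ × (ℕ → Fin n))),
      l.foldr (fun k acc => ((G (k + 1)).map fun c => (k + 1, c.1, c.2)) ++ acc) init
      = l.foldr (fun k acc => ((G (k + 1)).map fun c => (k + 1, c.1, c.2)) ++ acc) []
          ++ init := by
    intro l
    induction l with
    | nil => simp
    | cons a l ih =>
      intro init
      rw [List.foldr_cons, List.foldr_cons, ih init, List.append_assoc]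
  have hfoldr : ∀ (m : ℕ),
      (List.range (m+1)).foldr
        (fun k acc => ((G (k + 1)).map fun c => (k + 1, c.1, c.2)) ++ acc) []
      = ((List.range m).foldr
          (fun k acc => ((G (k + 1)).map fun c => (k + 1, c.1, c.2)) ++ acc) [])
        ++ (G (m + 1)).map (fun c => (m + 1, c.1, c.2)) := by
    intro m
    rw [List.range_succ, List.foldr_append]
    simp only [List.foldr_cons, List.foldr_nil]
    rw [generalInit, List.append_nil]
  intro m
  induction m with
  | zero =>
    intro _
    constructor
    · intro i hi; simp at hi
    · intro j hj1 hj2; omega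
  | succ m ih =>
    intro hm
    obtain ⟨hok, hcov⟩ := ih (by omega)
    rw [hfoldr m, List.foldl_append]
    have hblk : ∀ x ∈ (G (m+1)).map (fun c => (m+1, c.1, c.2)),
        x.1 = m+1 ∧ (x.2.1, x.2.2) ∈ G (m+1) := by
      intro x hx
      obtain ⟨c, hc, rfl⟩ := List.mem_map.mp hx
      exact ⟨rfl, by simpa using hc⟩
    have hcov' : ∀ d ∈ G (m+1-1), circNodes d.1 d.2 ⊆ unionNodes
        (((List.range m).foldr
          (fun k acc => ((G (k + 1)).map fun c => (k + 1, c.1, c.2)) ++ acc) []).foldl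
            algStep []) := by
      simp only [Nat.add_sub_cancel]
      intro d hd
      rcases Nat.eq_zero_or_pos m with rfl | hmpos
      · rw [hG0] at hd; exact absurd hd List.not_mem_nil
      · exact hcov m hmpos (le_refl m) d hd
    obtain ⟨s1, s2, s3⟩ := algFold_inv (A := A) (G := G)
      ((G (m+1)).map (fun c => (m+1, c.1, c.2))) (m+1) (by omega) hm _ hok hcov' hblk
    refine ⟨s1, ?_⟩
    intro j hj1 hj2 d hd
    rcases Nat.lt_or_ge j (m+1) with hlt | hge
    · exact (hcov j hj1 (by omega) d hd).trans s2
    · have hj : j = m+1 := by omega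
      subst hj
      exact s3 (m+1, d.1, d.2) (List.mem_map.mpr ⟨d, hd, rfl⟩)

lemma unionNodes_reverse (l : List (Grp n)) : unionNodes l.reverse = unionNodes l := by
  ext v
  simp only [mem_unionNodes, List.mem_reverse]

lemma algPartition_eq (p : ℕ) (G : ℕ → List (ℕ × (ℕ → Fin n))) :
    algPartition p G =
      (match (((List.range p).foldr
          (fun k acc => ((G (k + 1)).map fun c => (k + 1, c.1, c.2)) ++ acc) []).foldl
            algStep []) with
        | [] => ([] : List (Grp n))
        | g :: rest =>
            (({ g with nodes := g.nodes ∪ (Finset.univ \ unionNodes (g :: rest)) } : Grp n)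
              :: rest).reverse) := rfl

lemma getElem_congr' {α : Type*} (l : List α) {a b : ℕ} (hab : a = b)
    (ha : a < l.length) (hb : b < l.length) : l[a]'ha = l[b]'hb := by
  subst hab; rfl

lemma algPartition_spec {A : Matrix (Fin n) (Fin n) Rmax} {p : ℕ}
    {G : ℕ → List (ℕ × (ℕ → Fin n))} (hG0 : G 0 = []) :
    ∀ s (hs : s < (algPartition p G).length),
      ((((algPartition p G)[s]'hs).ct, ((algPartition p G)[s]'hs).cp)
          ∈ G (((algPartition p G)[s]'hs).k)) ∧
      1 ≤ ((algPartition p G)[s]'hs).k ∧ ((algPartition p G)[s]'hs).k ≤ p ∧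
      (∀ v ∈ circNodes ((algPartition p G)[s]'hs).ct ((algPartition p G)[s]'hs).cp,
        v ∉ Useq (algPartition p G) s) ∧
      (∀ c ∈ G (((algPartition p G)[s]'hs).k - 1),
        circNodes c.1 c.2 ⊆ Useq (algPartition p G) s) := by
  have hok : GrpOK p G (((List.range p).foldr
      (fun k acc => ((G (k + 1)).map fun c => (k + 1, c.1, c.2)) ++ acc) []).foldl
        algStep []) := (algFold_all (A := A) hG0 p (le_refl p)).1
  cases hstt : (((List.range p).foldr
      (fun k acc => ((G (k + 1)).map fun c => (k + 1, c.1, c.2)) ++ acc) []).foldl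
        algStep []) with
  | nil =>
    have hGs : algPartition p G = [] := by rw [algPartition_eq, hstt]
    intro s hs
    rw [hGs] at hs
    simp at hs
  | cons g rest =>
    rw [hstt] at hok
    set g' : Grp n := { g with nodes := g.nodes ∪ (Finset.univ \ unionNodes (g :: rest)) }
      with hg'
    have hGs : algPartition p G = (g' :: rest).reverse := by rw [algPartition_eq, hstt]
    intro s hs
    have hs' : s < rest.length + 1 := by
      rw [hGs] at hs; simpa using hs
    set i := rest.length - s with hi
    have hilt : i < (g :: rest).length := by simp only [List.length_cons]; omega
    have hilt' : i < (g' :: rest).length := by simp only [List.length_cons]; omega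
    have hidx : (algPartition p G)[s]'hs = (g' :: rest)[i]'hilt' := by
      have h1 : (g' :: rest).length - 1 - s = i := by simp only [List.length_cons]; omega
      simp only [hGs]
      rw [List.getElem_reverse]
      exact getElem_congr' _ h1 _ _
    have hfields : ((g' :: rest)[i]'hilt').ct = ((g :: rest)[i]'hilt).ct ∧
        ((g' :: rest)[i]'hilt').cp = ((g :: rest)[i]'hilt).cp ∧
        ((g' :: rest)[i]'hilt').k = ((g :: rest)[i]'hilt).k := by
      match i with
      | 0 => exact ⟨rfl, rfl, rfl⟩
      | (j+1) => exact ⟨rfl, rfl, rfl⟩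
    have hct : ((algPartition p G)[s]'hs).ct = ((g :: rest)[i]'hilt).ct := by
      rw [hidx]; exact hfields.1
    have hcp : ((algPartition p G)[s]'hs).cp = ((g :: rest)[i]'hilt).cp := by
      rw [hidx]; exact hfields.2.1
    have hk : ((algPartition p G)[s]'hs).k = ((g :: rest)[i]'hilt).k := by
      rw [hidx]; exact hfields.2.2
    have hdrop : (g' :: rest).drop (i+1) = (g :: rest).drop (i+1) := by
      match i with
      | 0 => rfl
      | (j+1) => rfl
    have hUseq : Useq (algPartition p G) s = unionNodes ((g :: rest).drop (i + 1)) := by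
      rw [Useq, hGs, List.take_reverse, unionNodes_reverse]
      have h1 : (g' :: rest).length - s = i + 1 := by simp only [List.length_cons]; omega
      rw [h1, hdrop]
    obtain ⟨h1, h2, h3, h4, h5⟩ := hok i hilt
    exact ⟨by rw [hct, hcp, hk]; exact h1, by rw [hk]; exact h2, by rw [hk]; exact h3,
      by rw [hct, hcp, hUseq]; exact h4, by rw [hk, hUseq]; exact h5⟩

lemma mcWeight_append (A : Matrix (Fin n) (Fin n) Rmax) (l1 l2 : List (ℕ × (ℕ → Fin n))) :
    mcWeight A (l1 ++ l2) = mcWeight A l1 + mcWeight A l2 := by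
  rw [mcWeight, mcWeight, mcWeight, List.map_append, List.sum_append]

lemma mcWeight_cons (A : Matrix (Fin n) (Fin n) Rmax) (c : ℕ × (ℕ → Fin n))
    (l : List (ℕ × (ℕ → Fin n))) :
    mcWeight A (c :: l) = weight A c.1 c.2 + mcWeight A l := by
  rw [mcWeight, mcWeight, List.map_cons, List.sum_cons]

lemma mcWeight_singleton (A : Matrix (Fin n) (Fin n) Rmax) (c : ℕ × (ℕ → Fin n)) :
    mcWeight A [c] = weight A c.1 c.2 := by
  rw [mcWeight]; simp

lemma mcLength_append (l1 l2 : List (ℕ × (ℕ → Fin n))) :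
    mcLength (l1 ++ l2) = mcLength l1 + mcLength l2 := by
  rw [mcLength, mcLength, mcLength, List.map_append, List.sum_append]

lemma mcLength_cons (c : ℕ × (ℕ → Fin n)) (l : List (ℕ × (ℕ → Fin n))) :
    mcLength (c :: l) = c.1 + mcLength l := by
  rw [mcLength, mcLength, List.map_cons, List.sum_cons]

lemma mcLength_singleton (c : ℕ × (ℕ → Fin n)) : mcLength [c] = c.1 := by
  rw [mcLength]; simp

lemma mc_walks {A : Matrix (Fin n) (Fin n) Rmax} {L : List (ℕ × (ℕ → Fin n))}
    (h : IsMultiCircuit A L) : ∀ c ∈ L, IsWalk A c.1 c.2 :=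
  fun c hc => (h.1 c hc).1.2.1

lemma mcVal_le_real {A : Matrix (Fin n) (Fin n) Rmax} {L1 L2 : List (ℕ × (ℕ → Fin n))}
    {x : ℝ} {w1 w2 : ℝ}
    (h : mcVal A x L1 ≤ mcVal A x L2)
    (h1 : mcWeight A L1 = ((w1:ℝ):Rmax)) (h2 : mcWeight A L2 = ((w2:ℝ):Rmax)) :
    w1 + ((n:ℝ) - (mcLength L1 : ℝ)) * x ≤ w2 + ((n:ℝ) - (mcLength L2 : ℝ)) * x := by
  rw [mcVal, mcVal, h1, h2, ← WithBot.coe_add, ← WithBot.coe_add, WithBot.coe_le_coe] at h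
  exact h

lemma mean_eq0 {A : Matrix (Fin n) (Fin n) Rmax} {t : ℕ} {q : ℕ → Fin n} {w : ℝ}
    (hw : weight A t q = ((w : ℝ) : Rmax)) : mean A t q = w / t := by
  rw [mean, hw]; rfl

lemma exists_elem_subcircuit {A : Matrix (Fin n) (Fin n) Rmax} :
    ∀ t q, IsCircuit A t q → ∃ t' q', IsElemCircuit A t' q' ∧
      circNodes t' q' ⊆ circNodes t q ∧ mean A t q ≤ mean A t' q' := by
  intro t
  induction t using Nat.strong_induction_on with
  | _ t ih =>
  intro q hq
  by_cases helem : ∀ k, k < t → ∀ l, l < t → q k = q l → k = l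
  · exact ⟨t, q, ⟨hq, helem⟩, Finset.Subset.refl _, le_refl _⟩
  push_neg at helem
  obtain ⟨k0, hk0, l0, hl0, heq0, hne0⟩ := helem
  have main : ∀ k l, k < l → l < t → q k = q l →
      ∃ t' q', IsElemCircuit A t' q' ∧ circNodes t' q' ⊆ circNodes t q ∧
        mean A t q ≤ mean A t' q' := by
    intro k l hkl hlt hql
    obtain ⟨htpos, hwalk, hclose⟩ := hq
    set t1 := l - k with ht1
    set t2 := t - t1 with ht2
    have ht1pos : 0 < t1 := by omega
    have ht2pos : 0 < t2 := by omega
    have hklt : k + t1 = l := by omega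
    have htt : t1 + t2 = t := by omega
    set q1 : ℕ → Fin n := fun j => q (k + j) with hq1
    set q2 : ℕ → Fin n := fun j => if j < k then q j else q (j + t1) with hq2
    have hc1 : IsCircuit A t1 q1 := by
      refine ⟨ht1pos, fun j hj => ?_, ?_⟩
      · show A (q (k + j)) (q (k + (j+1))) ≠ ⊥
        exact hwalk (k + j) (by omega)
      · show q (k + t1) = q (k + 0)
        rw [hklt]; exact hql.symm
    have harc2 : ∀ j, j < t2 → A (q2 j) (q2 (j+1)) =
        A (q (if j < k then j else j + t1)) (q ((if j < k then j else j + t1) + 1)) := by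
      intro j hj
      by_cases hjk : j < k
      · by_cases hjk1 : j + 1 < k
        · simp only [hq2, if_pos hjk, if_pos hjk1]
        · have hj1 : j + 1 = k := by omega
          simp only [hq2, if_pos hjk, if_neg hjk1]
          rw [hj1, hklt, ← hql, ← hj1]
      · have hjk1 : ¬ (j + 1 < k) := by omega
        simp only [hq2, if_neg hjk, if_neg hjk1]
        rw [show j + 1 + t1 = (j + t1) + 1 from by omega]
    have hc2 : IsCircuit A t2 q2 := by
      refine ⟨ht2pos, fun j hj => ?_, ?_⟩
      · rw [harc2 j hj]
        by_cases hjk : j < k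
        · simp only [if_pos hjk]; exact hwalk j (by omega)
        · simp only [if_neg hjk]; exact hwalk (j + t1) (by omega)
      · have h2k : ¬ (t2 < k) := by omega
        simp only [hq2, if_neg h2k]
        rw [show t2 + t1 = t from by omega, hclose]
        by_cases hk' : 0 < k
        · rw [if_pos hk']
        · rw [if_neg hk']
          have hk0' : k = 0 := by omega
          rw [show (0:ℕ) + t1 = l from by omega, ← hql, hk0']
    have hrex : ∀ m : ℕ, ∃ r : ℝ, m < t → A (q m) (q (m+1)) = ((r:ℝ):Rmax) := by
      intro m
      by_cases hm : m < t
      · obtain ⟨a, ha⟩ := WithBot.ne_bot_iff_exists.mp (hwalk m hm)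
        exact ⟨a, fun _ => ha.symm⟩
      · exact ⟨0, fun h => absurd h hm⟩
    choose r hr using hrex
    have hwq : weight A t q = ((∑ m ∈ Finset.range t, r m : ℝ) : Rmax) := by
      rw [coe_finsetSum]
      exact Finset.sum_congr rfl fun m hm => hr m (Finset.mem_range.mp hm)
    have hwq1 : weight A t1 q1 = ((∑ j ∈ Finset.range t1, r (k + j) : ℝ) : Rmax) := by
      rw [coe_finsetSum]
      refine Finset.sum_congr rfl fun j hj => ?_
      have hj' := Finset.mem_range.mp hj
      show A (q (k + j)) (q (k + (j+1))) = _
      exact hr (k + j) (by omega)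
    have hwq2 : weight A t2 q2 =
        ((∑ j ∈ Finset.range t2, r (if j < k then j else j + t1) : ℝ) : Rmax) := by
      rw [coe_finsetSum]
      refine Finset.sum_congr rfl fun j hj => ?_
      have hj' := Finset.mem_range.mp hj
      rw [harc2 j hj']
      by_cases hjk : j < k
      · simp only [if_pos hjk]; exact hr j (by omega)
      · simp only [if_neg hjk]; exact hr (j + t1) (by omega)
    set w1 : ℝ := ∑ j ∈ Finset.range t1, r (k + j) with hw1
    set w2 : ℝ := ∑ j ∈ Finset.range t2, r (if j < k then j else j + t1) with hw2
    have hsum : (∑ m ∈ Finset.range t, r m) = w1 + w2 := by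
      have eA : ∑ m ∈ Finset.Ico 0 l, r m + ∑ m ∈ Finset.Ico l t, r m
          = ∑ m ∈ Finset.Ico 0 t, r m :=
        Finset.sum_Ico_consecutive r (by omega) (by omega)
      have eB : ∑ m ∈ Finset.Ico 0 k, r m + ∑ m ∈ Finset.Ico k l, r m
          = ∑ m ∈ Finset.Ico 0 l, r m :=
        Finset.sum_Ico_consecutive r (by omega) (by omega)
      have eW1 : ∑ m ∈ Finset.Ico k l, r m = w1 := by
        rw [Finset.sum_Ico_eq_sum_range, hw1, ht1]
      have eC : ∑ j ∈ Finset.Ico 0 k, (fun j => r (if j < k then j else j + t1)) j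
          + ∑ j ∈ Finset.Ico k t2, (fun j => r (if j < k then j else j + t1)) j
          = ∑ j ∈ Finset.Ico 0 t2, (fun j => r (if j < k then j else j + t1)) j :=
        Finset.sum_Ico_consecutive _ (by omega) (by omega)
      have eD : ∑ j ∈ Finset.Ico 0 k, (fun j => r (if j < k then j else j + t1)) j
          = ∑ m ∈ Finset.Ico 0 k, r m := by
        refine Finset.sum_congr rfl fun j hj => ?_
        have := Finset.mem_Ico.mp hj
        simp only [if_pos this.2]
      have eE : ∑ j ∈ Finset.Ico k t2, (fun j => r (if j < k then j else j + t1)) j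
          = ∑ m ∈ Finset.Ico l t, r m := by
        have e1 : ∑ j ∈ Finset.Ico k t2, (fun j => r (if j < k then j else j + t1)) j
            = ∑ j ∈ Finset.Ico k t2, r (j + t1) := by
          refine Finset.sum_congr rfl fun j hj => ?_
          have := Finset.mem_Ico.mp hj
          simp only [if_neg (by omega : ¬ j < k)]
        rw [e1, Finset.sum_Ico_eq_sum_range, Finset.sum_Ico_eq_sum_range]
        refine Finset.sum_congr (by rw [show t2 - k = t - l from by omega]) fun i hi => ?_
        rw [show k + i + t1 = l + i from by omega]
      have eF : w2 = ∑ m ∈ Finset.Ico 0 k, r m + ∑ m ∈ Finset.Ico l t, r m := by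
        rw [hw2, Finset.range_eq_Ico, ← eC, eD, eE]
      rw [Finset.range_eq_Ico, ← eA, ← eB, eF, eW1]
      ring
    have hmm : mean A t q ≤ max (mean A t1 q1) (mean A t2 q2) := by
      rw [mean_eq0 hwq, hsum, mean_eq0 hwq1, mean_eq0 hwq2, ← htt]
      push_cast
      exact mediant_le (by exact_mod_cast ht1pos) (by exact_mod_cast ht2pos)
    have hsub1 : circNodes t1 q1 ⊆ circNodes t q := by
      intro v hv
      obtain ⟨j, hj, hv⟩ := mem_circNodes.mp hv
      exact mem_circNodes.mpr ⟨k + j, by omega, hv⟩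
    have hsub2 : circNodes t2 q2 ⊆ circNodes t q := by
      intro v hv
      obtain ⟨j, hj, hv⟩ := mem_circNodes.mp hv
      by_cases hjk : j < k
      · refine mem_circNodes.mpr ⟨j, by omega, ?_⟩
        rw [← hv, hq2]; simp only [if_pos hjk]
      · refine mem_circNodes.mpr ⟨j + t1, by omega, ?_⟩
        rw [← hv, hq2]; simp only [if_neg hjk]
    rcases max_cases (mean A t1 q1) (mean A t2 q2) with ⟨hmax, _⟩ | ⟨hmax, _⟩ <;>
      rw [hmax] at hmm
    · obtain ⟨t', q', helem', hsub', hge'⟩ := ih t1 (by omega) q1 hc1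
      exact ⟨t', q', helem', hsub'.trans hsub1, le_trans hmm hge'⟩
    · obtain ⟨t', q', helem', hsub', hge'⟩ := ih t2 (by omega) q2 hc2
      exact ⟨t', q', helem', hsub'.trans hsub2, le_trans hmm hge'⟩
  rcases lt_or_gt_of_ne hne0 with h | h
  · exact main k0 l0 h hl0 heq0
  · exact main l0 k0 h hk0 heq0.symm

lemma mean_eq {A : Matrix (Fin n) (Fin n) Rmax} {t : ℕ} {q : ℕ → Fin n} {w : ℝ}
    (hw : weight A t q = ((w : ℝ) : Rmax)) : mean A t q = w / t := by
  rw [mean, hw]; rfl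

end

end MaxPlus

open MaxPlus in
/-- **Lemma 2.** Let `N_1, …, N_r` be the node partition produced by
Algorithm 1 (groups listed in creation order, each with its quasi-critical circuit
and index `k(s)`).  For each `s`, the quasi-critical circuit of `N_s` has mean weight
exactly `λ_{k(s)}`, and in the subgraph `𝒢(A(V_s))` induced by `V_s = N ∖ U_{s−1}`
the maximum mean weight of circuits equals `λ_{k(s)}`. -/
theorem quasiCritical_mean_and_induced_max_mean {n : ℕ}
    (A : Matrix (Fin n) (Fin n) Rmax)
    (rs : Fin n → Rmax) (hroots : IsCharRoots A rs)
    (p : ℕ) (lam : ℕ → ℝ) (hfr : IsFiniteRootSeq rs p lam)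
    (G : ℕ → List (ℕ × (ℕ → Fin n))) (hG : IsMMCS A p lam G)
    (Gs : List (Grp n)) (hGs : Gs = algPartition p G) :
    ∀ s : Fin Gs.length,
      mean A (Gs.get s).ct (Gs.get s).cp = lam (Gs.get s).k ∧
      (∃ t q, IsCircuit A t q ∧ circNodes t q ⊆ Finset.univ \ Useq Gs s.val ∧
        mean A t q = lam (Gs.get s).k) ∧
      (∀ t q, IsCircuit A t q → circNodes t q ⊆ Finset.univ \ Useq Gs s.val →
        mean A t q ≤ lam (Gs.get s).k) := by
  subst hGs
  intro s
  have hG0 : G 0 = [] := hG.1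
  have hs := s.isLt
  obtain ⟨hmem, hk1, hk2, hdisj, hcov⟩ := algPartition_spec (A := A) hG0 s.val hs
  simp only [List.get_eq_getElem]
  set g := (algPartition p G)[s.val]'hs with hgdef
  set k := g.k with hkdef
  have hMMCk : IsMMC A (lam k) (G k) :=
    hG.2 k hk2 (lam k) (fun hkp => le_of_lt (hfr.1 k hk1 hkp)) (fun _ => le_refl _)
  have hkk : k - 1 + 1 = k := by omega
  have hMMCk1 : IsMMC A (lam k) (G (k - 1)) := by
    refine hG.2 (k-1) (by omega) (lam k) (fun _ => by rw [hkk]) (fun h2 => ?_)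
    have h3 := hfr.1 (k-1) h2 (by omega)
    rw [hkk] at h3
    exact le_of_lt h3
  have hmcGk : IsMultiCircuit A (G k) := hMMCk.1
  have hmcGk1 : IsMultiCircuit A (G (k-1)) := hMMCk1.1
  have helem : IsElemCircuit A g.ct g.cp := hmcGk.1 (g.ct, g.cp) hmem
  have hctpos : 0 < g.ct := helem.1.1
  have hsubC : circNodes g.ct g.cp ⊆ Finset.univ \ Useq (algPartition p G) s.val :=
    fun v hv => Finset.mem_sdiff.mpr ⟨Finset.mem_univ v, hdisj v hv⟩
  have hupper : ∀ t q, IsCircuit A t q →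
      circNodes t q ⊆ Finset.univ \ Useq (algPartition p G) s.val →
      mean A t q ≤ lam k := by
    intro t q hq hsub
    obtain ⟨t', q', helem', hsub', hge'⟩ := exists_elem_subcircuit t q hq
    refine le_trans hge' ?_
    have ht'pos : 0 < t' := helem'.1.1
    have hmc' : IsMultiCircuit A (G (k-1) ++ [(t', q')]) := by
      constructor
      · intro c hc
        rcases List.mem_append.mp hc with hc | hc
        · exact hmcGk1.1 c hc
        · rw [List.mem_singleton.mp hc]; exact helem'
      · rw [List.pairwise_append]
        refine ⟨hmcGk1.2, List.pairwise_singleton _ _, ?_⟩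
        intro c hc d hd
        rw [List.mem_singleton.mp hd]
        intro a ha b hb heq
        have h1 : c.2 a ∈ Useq (algPartition p G) s.val :=
          hcov c hc (mem_circNodes.mpr ⟨a, ha, rfl⟩)
        have h2 := hsub (hsub' (mem_circNodes.mpr ⟨b, hb, rfl⟩))
        rw [heq] at h1
        exact (Finset.mem_sdiff.mp h2).2 h1
    have hineq := mc_le_charPoly hmc' (lam k)
    rw [hMMCk1.2] at hineq
    obtain ⟨w0, hw0⟩ := mcWeight_coe (mc_walks hmcGk1)
    obtain ⟨w', hw'⟩ := weight_coe helem'.1.2.1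
    have hw'' : weight A ((t', q') : ℕ × (ℕ → Fin n)).1 ((t', q') : ℕ × (ℕ → Fin n)).2
        = ((w' : ℝ) : Rmax) := hw'
    have hwL' : mcWeight A (G (k-1) ++ [(t',q')]) = ((w0 + w' : ℝ) : Rmax) := by
      rw [mcWeight_append, hw0, mcWeight_singleton, hw'', ← WithBot.coe_add]
    have hreal := mcVal_le_real hineq hwL' hw0
    rw [mcLength_append, mcLength_singleton] at hreal
    rw [mean_eq0 hw', div_le_iff₀ (by exact_mod_cast ht'pos)]
    push_cast at hreal
    nlinarith [hreal]
  obtain ⟨L1, L2, hsplitGk⟩ := List.append_of_mem hmem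
  have hsubl : (L1 ++ L2).Sublist (G k) := by
    rw [hsplitGk]
    exact (List.Sublist.refl L1).append (List.sublist_cons_self _ _)
  have hmcL : IsMultiCircuit A (L1 ++ L2) :=
    ⟨fun c hc => hmcGk.1 c (hsubl.subset hc), hmcGk.2.sublist hsubl⟩
  obtain ⟨wA, hwA⟩ := mcWeight_coe (fun c hc => mc_walks hmcGk c
    (by rw [hsplitGk]; exact List.mem_append_left _ hc))
  obtain ⟨wB, hwB⟩ := mcWeight_coe (fun c hc => mc_walks hmcGk c
    (by rw [hsplitGk]; exact List.mem_append_right _ (List.mem_cons_of_mem _ hc)))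
  obtain ⟨wc, hwc⟩ := weight_coe helem.1.2.1
  have hwc' : weight A ((g.ct, g.cp) : ℕ × (ℕ → Fin n)).1 ((g.ct, g.cp) : ℕ × (ℕ → Fin n)).2
      = ((wc : ℝ) : Rmax) := hwc
  have hwGk : mcWeight A (G k) = ((wA + (wc + wB) : ℝ) : Rmax) := by
    rw [hsplitGk, mcWeight_append, mcWeight_cons, hwA, hwB, hwc',
      ← WithBot.coe_add, ← WithBot.coe_add]
  have hwL2 : mcWeight A (L1 ++ L2) = ((wA + wB : ℝ) : Rmax) := by
    rw [mcWeight_append, hwA, hwB, ← WithBot.coe_add]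
  have hineq2 := mc_le_charPoly hmcL (lam k)
  rw [hMMCk.2] at hineq2
  have hreal2 := mcVal_le_real hineq2 hwL2 hwGk
  have hlenGk : (mcLength (G k) : ℝ) = (mcLength L1 : ℝ) + g.ct + mcLength L2 := by
    rw [hsplitGk, mcLength_append, mcLength_cons]
    push_cast
    ring
  rw [mcLength_append, hlenGk] at hreal2
  push_cast at hreal2
  have hlow : lam k * g.ct ≤ wc := by nlinarith [hreal2]
  have hmean : mean A g.ct g.cp = lam k := by
    refine le_antisymm (hupper g.ct g.cp helem.1 hsubC) ?_
    rw [mean_eq0 hwc, le_div_iff₀ (by exact_mod_cast hctpos)]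
    linarith [hlow]
  exact ⟨hmean, ⟨g.ct, g.cp, helem.1, hsubC, hmean⟩, hupper⟩
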